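/- Let [P(x), -K(x)] and [N(x), -D(x)] form a basis of the interpolation module M_{i-1} for points (g_1,r_1),...,(g_{i-1},r_{i-1}). Set Gamma = P(g_i) - K(r_i) and Delta = N(g_i) - D(r_i). If Gamma is nonzero, then the rows of [[x^q - Gamma^{q-1} x, 0], [Delta x, -Gamma x]] composed with [[P, -K], [N, -D]] form a basis of the interpolation module M_i for points (g_1,r_1),...,(g_i,r_i). -/

import Mathlib

open Polynomial

/-- A `q`-linearized polynomial: all monomials have exponent a power of `q`. -/
def IsLin {F : Type*} [Field F] (q : ℕ) (f : Polynomial F) : Prop :=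
  ∀ i ∈ f.support, ∃ j : ℕ, i = q ^ j

/-- A vector of `q`-linearized polynomials. -/
def IsLinVec {F : Type*} [Field F] (q : ℕ) {l : ℕ} (f : Fin l → Polynomial F) : Prop :=
  ∀ i, IsLin q (f i)

/-- The interpolation module `M_i` for the first `i` points `(g j, r j)`, `j < i`:
all pairs `[f, g]` of `q`-linearized polynomials with `f(g j) + g(r j) = 0` for `j < i`. -/
def InterpModN {F : Type*} [Field F] (q : ℕ) (g r : ℕ → F) (i : ℕ) :
    Set (Fin 2 → Polynomial F) :=
  {p | IsLinVec q p ∧ ∀ j < i, (p 0).eval (g j) + (p 1).eval (r j) = 0}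

/-- `B` is a basis of `M`: its members lie in `M`, generate `M` by left combinations
`∑ aᵢ ∘ bᵢ` with `q`-linearized coefficients, and are linearly independent. -/
def IsBasisOf {F : Type*} [Field F] (q : ℕ) {l : ℕ} {ι : Type*} [Fintype ι]
    (M : Set (Fin l → Polynomial F)) (B : ι → Fin l → Polynomial F) : Prop :=
  (∀ i, B i ∈ M) ∧
  (∀ f ∈ M, ∃ a : ι → Polynomial F, (∀ i, IsLin q (a i)) ∧
    f = fun j => ∑ i, (a i).comp (B i j)) ∧
  (∀ a : ι → Polynomial F, (∀ i, IsLin q (a i)) →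
    ((fun j => ∑ i, (a i).comp (B i j)) = fun _ => (0 : Polynomial F)) → ∀ i, a i = 0)

/-!
Write `B = [[P, -K], [N, -D]]` and `A = [[x^q - Γ^(q-1) x, 0], [Δ x, -Γ x]]`. In characteristic
`p`, with `q` a power of `p`, linearized polynomials are additive, so composition of matrices of
linearized polynomials is associative, and the value of `a ∘ [P, -K] + b ∘ [N, -D]` at the new
point `(g i, r i)` is `a(Γ) + b(Δ)`. This makes both rows of `A ∘ B` vanish at the new point.
Conversely, if `a(Γ) + b(Δ) = 0` then `c = a + b ∘ (Γ⁻¹Δ x)` vanishes at `Γ`; reducing each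
`x^(q^j)` modulo right composition with `x^q - Γ^(q-1) x` leaves a multiple of `x`, which must then
be zero, so `c = d ∘ (x^q - Γ^(q-1) x)` and `(a, b) = (d, b ∘ (-Γ⁻¹ x)) ∘ A`: the rows of `A ∘ B`
span `M_(i+1)`. They are independent because `B` is and because composing on the right with the
nonconstant polynomials `-Γ x` and `x^q - Γ^(q-1) x` is injective.
-/

theorem Polynomial.C_mul_X_comp_C_mul_X {R : Type*} [CommRing R] (a b : R) :
    (C a * X).comp (C b * X) = C (a * b) * X := by
  rw [C_mul_comp, X_comp, C_mul, mul_assoc]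

theorem Polynomial.eval_X_pow_sub_C_pow_mul_X {R : Type*} [CommRing R] {q : ℕ} (hq : 0 < q)
    (Γ : R) :
    (X ^ q - C (Γ ^ (q - 1)) * X).eval Γ = 0 := by
  rw [eval_sub, eval_mul, eval_pow, eval_C, eval_X, ← pow_succ, Nat.sub_add_cancel hq, sub_self]

theorem Polynomial.eq_zero_of_comp_eq_zero {R : Type*} [CommRing R] [IsDomain R] {f g : R[X]}
    (hg : g.natDegree ≠ 0) (h : f.comp g = 0) : f = 0 := by
  rcases comp_eq_zero_iff.mp h with hf | ⟨-, hgC⟩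
  · exact hf
  · exact absurd (hgC ▸ natDegree_C _) hg

theorem Polynomial.natDegree_X_pow_sub_C_mul_X {R : Type*} [CommRing R] [Nontrivial R] {q : ℕ}
    (hq : 1 < q) (γ : R) : (X ^ q - C γ * X).natDegree = q := by
  rw [natDegree_sub_eq_left_of_natDegree_lt] <;> rw [natDegree_X_pow]
  exact (natDegree_C_mul_le γ X).trans_lt (natDegree_X.trans_lt hq)

section Linearized

variable {F : Type*} [Field F] {q : ℕ}

theorem isLin_zero : IsLin q (0 : F[X]) := by
  simp [IsLin]

theorem isLin_X_pow_pow (j : ℕ) : IsLin q (X ^ q ^ j : F[X]) := fun i hi =>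
  ⟨j, by rwa [support_X_pow, Finset.mem_singleton] at hi⟩

theorem isLin_C_mul_X (c : F) : IsLin q (C c * X) := fun _ hi =>
  ⟨0, by simpa using support_C_mul_X_subset c hi⟩

theorem IsLin.add {f g : F[X]} (hf : IsLin q f) (hg : IsLin q g) : IsLin q (f + g) :=
  fun i hi => (Finset.mem_union.mp (support_add hi)).elim (hf i) (hg i)

theorem IsLin.C_mul {f : F[X]} (hf : IsLin q f) (c : F) : IsLin q (C c * f) := fun i hi =>
  hf i (by rw [← smul_eq_C_mul] at hi; exact support_smul c f hi)

theorem IsLin.neg {f : F[X]} (hf : IsLin q f) : IsLin q (-f) := fun i hi =>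
  hf i (by rwa [support_neg] at hi)

theorem isLin_X_pow_sub_C_mul_X (γ : F) : IsLin q (X ^ q - C γ * X) := by
  simpa [sub_eq_add_neg] using (isLin_X_pow_pow 1).add (isLin_C_mul_X γ).neg

@[elab_as_elim]
theorem IsLin.induction_on {motive : F[X] → Prop} {f : F[X]} (hf : IsLin q f)
    (X_pow_pow : ∀ j, motive (X ^ q ^ j))
    (add : ∀ f g, motive f → motive g → motive (f + g))
    (C_mul : ∀ c f, motive f → motive (C c * f)) : motive f := by
  rw [f.as_sum_support_C_mul_X_pow]
  refine Finset.sum_induction _ motive add (by simpa using C_mul 0 _ (X_pow_pow 0)) ?_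
  intro i hi
  obtain ⟨j, rfl⟩ := hf i hi
  exact C_mul _ _ (X_pow_pow j)

section ExpChar

variable {p e : ℕ} [ExpChar F p]

theorem IsLin.comp_add (hq : q = p ^ e) {f : F[X]} (hf : IsLin q f) (u v : F[X]) :
    f.comp (u + v) = f.comp u + f.comp v := by
  refine hf.induction_on (fun j => ?_) (fun f g hf hg => ?_) (fun c f hf => ?_)
  · simp only [X_pow_comp, hq, ← pow_mul, add_pow_expChar_pow]
  · simp only [add_comp, hf, hg]; ring
  · simp only [C_mul_comp, hf, mul_add]

theorem IsLin.eval_add (hq : q = p ^ e) {f : F[X]} (hf : IsLin q f) (x y : F) :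
    f.eval (x + y) = f.eval x + f.eval y := by
  simpa [eval_comp] using congrArg (eval 0) (hf.comp_add hq (C x) (C y))

theorem IsLin.eval_zero (hq : q = p ^ e) {f : F[X]} (hf : IsLin q f) : f.eval 0 = 0 := by
  simpa using hf.eval_add hq 0 0

theorem IsLin.pow (hq : q = p ^ e) {f : F[X]} (hf : IsLin q f) (j : ℕ) :
    IsLin q (f ^ q ^ j) := by
  refine hf.induction_on (fun m => ?_) (fun f g hf hg => ?_) (fun c f hf => ?_)
  · rw [← pow_mul, ← pow_add]; exact isLin_X_pow_pow _
  · rw [hq, ← pow_mul, add_pow_expChar_pow, pow_mul, ← hq]; exact hf.add hg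
  · rw [mul_pow, ← C_pow]; exact hf.C_mul _

theorem IsLin.comp (hq : q = p ^ e) {f g : F[X]} (hf : IsLin q f) (hg : IsLin q g) :
    IsLin q (f.comp g) := by
  refine hf.induction_on (fun j => ?_) (fun f f' hf hf' => ?_) (fun c f hf => ?_)
  · rw [X_pow_comp]; exact hg.pow hq j
  · rw [add_comp]; exact hf.add hf'
  · rw [C_mul_comp]; exact hf.C_mul c

theorem IsLin.exists_eq_comp_add_C_mul_X (hq : q = p ^ e) {f : F[X]} (hf : IsLin q f)
    (γ : F) : ∃ d α, IsLin q d ∧ f = d.comp (X ^ q - C γ * X) + C α * X := by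
  set T : F[X] := X ^ q - C γ * X
  refine hf.induction_on (fun j => ?_) ?_ ?_
  · induction j with
    | zero => exact ⟨0, 1, isLin_zero, by simp⟩
    | succ j ih =>
      obtain ⟨d, α, hd, hj⟩ := ih
      refine ⟨X ^ q ^ j + C (γ ^ q ^ j) * d, γ ^ q ^ j * α,
        (isLin_X_pow_pow j).add (hd.C_mul _), ?_⟩
      calc (X ^ q ^ (j + 1) : F[X])
          = (X ^ q ^ j).comp T + (X ^ q ^ j).comp (C γ * X) := by
            rw [← (isLin_X_pow_pow j).comp_add hq, sub_add_cancel, X_pow_comp, ← pow_mul,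
              pow_succ']
        _ = _ := by
            rw [X_pow_comp (p := C γ * X), mul_pow, ← C_pow, add_comp, C_mul_comp,
              Polynomial.C_mul]
            linear_combination C (γ ^ q ^ j) * hj
  · rintro f g ⟨d, α, hd, rfl⟩ ⟨d', α', hd', rfl⟩
    exact ⟨d + d', α + α', hd.add hd', by rw [add_comp, C_add]; ring⟩
  · rintro c f ⟨d, α, hd, rfl⟩
    exact ⟨C c * d, c * α, hd.C_mul c, by rw [C_mul_comp, Polynomial.C_mul]; ring⟩

theorem IsLin.exists_eq_comp_of_eval_eq_zero (hq : q = p ^ e) (hq0 : 0 < q) {f : F[X]}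
    (hf : IsLin q f) {Γ : F} (hΓ : Γ ≠ 0) (hfΓ : f.eval Γ = 0) :
    ∃ d, IsLin q d ∧ f = d.comp (X ^ q - C (Γ ^ (q - 1)) * X) := by
  obtain ⟨d, α, hd, rfl⟩ := hf.exists_eq_comp_add_C_mul_X hq (Γ ^ (q - 1))
  rw [Polynomial.eval_add, eval_comp, eval_X_pow_sub_C_pow_mul_X hq0, hd.eval_zero hq, zero_add,
    eval_mul, eval_C, eval_X, mul_eq_zero, or_iff_left hΓ] at hfΓ
  exact ⟨d, hd, by rw [hfΓ, C_0, zero_mul, add_zero]⟩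

end ExpChar

end Linearized

section Rows

variable {F : Type*} [Field F] {q p e : ℕ}

noncomputable def compVec {ι : Type*} (a : F[X]) (u : ι → F[X]) : ι → F[X] :=
  fun j => a.comp (u j)

noncomputable def evalAt (x y : F) (u : Fin 2 → F[X]) : F := (u 0).eval x + (u 1).eval y

@[simp]
theorem compVec_apply {ι : Type*} (a : F[X]) (u : ι → F[X]) (j : ι) :
    compVec a u j = a.comp (u j) := rfl

theorem compVec_compVec {ι : Type*} (a b : F[X]) (u : ι → F[X]) :
    compVec a (compVec b u) = compVec (a.comp b) u :=
  funext fun _ => (Polynomial.comp_assoc ..).symm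

theorem add_compVec {ι : Type*} (a b : F[X]) (u : ι → F[X]) :
    compVec (a + b) u = compVec a u + compVec b u := funext fun _ => add_comp ..

theorem IsLin.compVec_add [ExpChar F p] (hq : q = p ^ e) {a : F[X]} (ha : IsLin q a)
    {ι : Type*} (u v : ι → F[X]) : compVec a (u + v) = compVec a u + compVec a v :=
  funext fun _ => ha.comp_add hq ..

/-- Composition with the matrix `[[s, 0], [s', t']]` of linearized polynomials is associative. -/
theorem IsLin.compVec_add_compVec_assoc [ExpChar F p] (hq : q = p ^ e) {a b : F[X]}
    (hb : IsLin q b) {ι : Type*} (u v : ι → F[X]) (s s' t' : F[X]) :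
    compVec a (compVec s u) + compVec b (compVec s' u + compVec t' v) =
      compVec (a.comp s + b.comp s') u + compVec (b.comp t') v := by
  simp only [hb.compVec_add hq, compVec_compVec, add_compVec]
  abel

theorem evalAt_add (x y : F) (u v : Fin 2 → F[X]) :
    evalAt x y (u + v) = evalAt x y u + evalAt x y v := by
  simp only [evalAt, Pi.add_apply, eval_add]
  ring

theorem IsLin.evalAt_compVec [ExpChar F p] (hq : q = p ^ e) {a : F[X]} (ha : IsLin q a)
    (x y : F) (u : Fin 2 → F[X]) : evalAt x y (compVec a u) = a.eval (evalAt x y u) := by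
  simp only [evalAt, compVec_apply, eval_comp, ha.eval_add hq]

theorem isBasisOf_pair_iff {l : ℕ} {M : Set (Fin l → F[X])} {u v : Fin l → F[X]} :
    IsBasisOf q M ![u, v] ↔ (u ∈ M ∧ v ∈ M) ∧
      (∀ f ∈ M, ∃ a b, IsLin q a ∧ IsLin q b ∧ f = compVec a u + compVec b v) ∧
      ∀ a b, IsLin q a → IsLin q b → compVec a u + compVec b v = 0 → a = 0 ∧ b = 0 := by
  have hsum (c : Fin 2 → F[X]) :
      (fun j => ∑ k, (c k).comp (![u, v] k j)) = compVec (c 0) u + compVec (c 1) v := by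
    ext1 j; simp [Fin.sum_univ_two]
  simp only [IsBasisOf, hsum, Fin.forall_fin_two]
  constructor
  · rintro ⟨hmem, hspan, hind⟩
    refine ⟨hmem, fun f hf => ?_, fun a b ha hb h => ?_⟩
    · obtain ⟨c, hc, rfl⟩ := hspan f hf
      exact ⟨c 0, c 1, hc.1, hc.2, rfl⟩
    · exact hind ![a, b] ⟨ha, hb⟩ h
  · rintro ⟨hmem, hspan, hind⟩
    refine ⟨hmem, fun f hf => ?_, fun c hc h => hind _ _ hc.1 hc.2 h⟩
    obtain ⟨a, b, ha, hb, rfl⟩ := hspan f hf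
    exact ⟨![a, b], ⟨ha, hb⟩, rfl⟩

end Rows

section Interpolation

variable {F : Type*} [Field F] {q p e : ℕ} {g r : ℕ → F} {i : ℕ}

theorem mem_interpModN_iff {f : Fin 2 → F[X]} :
    f ∈ InterpModN q g r i ↔ IsLinVec q f ∧ ∀ j < i, evalAt (g j) (r j) f = 0 := Iff.rfl

theorem mem_interpModN_succ {f : Fin 2 → F[X]} :
    f ∈ InterpModN q g r (i + 1) ↔
      f ∈ InterpModN q g r i ∧ evalAt (g i) (r i) f = 0 := by
  simp only [mem_interpModN_iff, Nat.lt_succ_iff_lt_or_eq, or_imp, forall_and,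
    forall_eq, and_assoc]

theorem add_mem_interpModN {f f' : Fin 2 → F[X]} (hf : f ∈ InterpModN q g r i)
    (hf' : f' ∈ InterpModN q g r i) : f + f' ∈ InterpModN q g r i := by
  rw [mem_interpModN_iff] at *
  exact ⟨fun k => (hf.1 k).add (hf'.1 k), fun j hj => by
    rw [evalAt_add, hf.2 j hj, hf'.2 j hj, add_zero]⟩

theorem IsLin.compVec_mem_interpModN [ExpChar F p] (hq : q = p ^ e) {a : F[X]}
    (ha : IsLin q a) {u : Fin 2 → F[X]} (hu : u ∈ InterpModN q g r i) :
    compVec a u ∈ InterpModN q g r i := by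
  rw [mem_interpModN_iff] at *
  exact ⟨fun k => ha.comp hq (hu.1 k), fun j hj => by
    rw [ha.evalAt_compVec hq, hu.2 j hj, ha.eval_zero hq]⟩

variable [ExpChar F p] {u v : Fin 2 → F[X]} {Γ Δ : F}

theorem rows_mem_interpModN_succ (hq : q = p ^ e) (hq0 : 0 < q)
    (hu : u ∈ InterpModN q g r i) (hv : v ∈ InterpModN q g r i)
    (hΓu : evalAt (g i) (r i) u = Γ) (hΔv : evalAt (g i) (r i) v = Δ) :
    compVec (X ^ q - C (Γ ^ (q - 1)) * X) u ∈ InterpModN q g r (i + 1) ∧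
      compVec (C Δ * X) u + compVec (C (-Γ) * X) v ∈ InterpModN q g r (i + 1) := by
  simp only [mem_interpModN_succ]
  refine ⟨⟨(isLin_X_pow_sub_C_mul_X _).compVec_mem_interpModN hq hu, ?_⟩,
    ⟨add_mem_interpModN ((isLin_C_mul_X Δ).compVec_mem_interpModN hq hu)
      ((isLin_C_mul_X (-Γ)).compVec_mem_interpModN hq hv), ?_⟩⟩
  · rw [(isLin_X_pow_sub_C_mul_X _).evalAt_compVec hq, hΓu,
      eval_X_pow_sub_C_pow_mul_X hq0]
  · rw [evalAt_add, (isLin_C_mul_X Δ).evalAt_compVec hq, (isLin_C_mul_X _).evalAt_compVec hq,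
      hΓu, hΔv]
    simp only [eval_mul, eval_C, eval_X]
    ring

theorem exists_eq_compVec_rows_of_mem_interpModN_succ (hq : q = p ^ e) (hq0 : 0 < q)
    (hB : IsBasisOf q (InterpModN q g r i) ![u, v])
    (hΓu : evalAt (g i) (r i) u = Γ) (hΔv : evalAt (g i) (r i) v = Δ) (hΓ : Γ ≠ 0)
    {f : Fin 2 → F[X]} (hf : f ∈ InterpModN q g r (i + 1)) :
    ∃ a b, IsLin q a ∧ IsLin q b ∧ f = compVec a (compVec (X ^ q - C (Γ ^ (q - 1)) * X) u) +
      compVec b (compVec (C Δ * X) u + compVec (C (-Γ) * X) v) := by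
  obtain ⟨hfi, hfΓ⟩ := mem_interpModN_succ.1 hf
  obtain ⟨a, b, ha, hb, rfl⟩ := (isBasisOf_pair_iff.1 hB).2.1 _ hfi
  rw [evalAt_add, ha.evalAt_compVec hq, hb.evalAt_compVec hq, hΓu, hΔv] at hfΓ
  have hbΓ := hb.comp hq (isLin_C_mul_X (Γ⁻¹ * Δ))
  obtain ⟨d, hd, hdc⟩ := (ha.add hbΓ).exists_eq_comp_of_eval_eq_zero hq hq0 hΓ
    (by rwa [Polynomial.eval_add, eval_comp, eval_mul, eval_C, eval_X, mul_right_comm,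
      inv_mul_cancel₀ hΓ, one_mul])
  refine ⟨d, b.comp (C (-Γ⁻¹) * X), hd, hb.comp hq (isLin_C_mul_X _), ?_⟩
  rw [(hb.comp hq (isLin_C_mul_X _)).compVec_add_compVec_assoc hq, ← hdc, comp_assoc, comp_assoc,
    C_mul_X_comp_C_mul_X, C_mul_X_comp_C_mul_X, add_assoc, ← hb.comp_add hq, ← add_mul, ← C_add]
  simp [hΓ, hb.eval_zero hq]

theorem eq_zero_of_compVec_rows_eq_zero (hq : q = p ^ e) (hq1 : 1 < q)
    (hB : IsBasisOf q (InterpModN q g r i) ![u, v]) (hΓ : Γ ≠ 0) {a b : F[X]}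
    (ha : IsLin q a) (hb : IsLin q b)
    (h : compVec a (compVec (X ^ q - C (Γ ^ (q - 1)) * X) u) +
      compVec b (compVec (C Δ * X) u + compVec (C (-Γ) * X) v) = 0) :
    a = 0 ∧ b = 0 := by
  rw [hb.compVec_add_compVec_assoc hq] at h
  obtain ⟨h₀, h₁⟩ := (isBasisOf_pair_iff.1 hB).2.2 _ _
    ((ha.comp hq (isLin_X_pow_sub_C_mul_X _)).add (hb.comp hq (isLin_C_mul_X _)))
    (hb.comp hq (isLin_C_mul_X _)) h
  have hb0 : b = 0 := eq_zero_of_comp_eq_zero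
    (by rw [natDegree_C_mul_X _ (neg_ne_zero.2 hΓ)]; exact one_ne_zero) h₁
  rw [hb0, zero_comp, add_zero] at h₀
  exact ⟨eq_zero_of_comp_eq_zero (by rw [natDegree_X_pow_sub_C_mul_X hq1]; omega) h₀, hb0⟩

theorem IsBasisOf.interpModN_succ (hq : q = p ^ e) (hq1 : 1 < q)
    (hB : IsBasisOf q (InterpModN q g r i) ![u, v])
    (hΓu : evalAt (g i) (r i) u = Γ) (hΔv : evalAt (g i) (r i) v = Δ) (hΓ : Γ ≠ 0) :
    IsBasisOf q (InterpModN q g r (i + 1)) ![compVec (X ^ q - C (Γ ^ (q - 1)) * X) u,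
      compVec (C Δ * X) u + compVec (C (-Γ) * X) v] := by
  have hq0 : 0 < q := by omega
  have hrows := (isBasisOf_pair_iff.1 hB).1
  exact isBasisOf_pair_iff.2 ⟨rows_mem_interpModN_succ hq hq0 hrows.1 hrows.2 hΓu hΔv,
    fun f hf => exists_eq_compVec_rows_of_mem_interpModN_succ hq hq0 hB hΓu hΔv hΓ hf,
    fun a b ha hb h => eq_zero_of_compVec_rows_eq_zero hq hq1 hB hΓ ha hb h⟩

end Interpolation

theorem stmt19_general {Fq F : Type*} [Field Fq] [Fintype Fq] [Field F] [Algebra Fq F]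
    (g r : ℕ → F)
    (i : ℕ)
    (P K N D : Polynomial F)
    (hB : IsBasisOf (Fintype.card Fq) (InterpModN (Fintype.card Fq) g r i)
      ![![P, -K], ![N, -D]])
    (Γ Δ : F) (hΓdef : Γ = P.eval (g i) - K.eval (r i))
    (hΔdef : Δ = N.eval (g i) - D.eval (r i)) (hΓ : Γ ≠ 0) :
    IsBasisOf (Fintype.card Fq) (InterpModN (Fintype.card Fq) g r (i + 1))
      ![![(X ^ Fintype.card Fq - C (Γ ^ (Fintype.card Fq - 1)) * X).comp P,
          (X ^ Fintype.card Fq - C (Γ ^ (Fintype.card Fq - 1)) * X).comp (-K)],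
        ![(C Δ * X).comp P + (C (-Γ) * X).comp N,
          (C Δ * X).comp (-K) + (C (-Γ) * X).comp (-D)]] := by
  obtain ⟨e, hp, hq⟩ := FiniteField.card Fq (ringChar Fq)
  have : CharP F (ringChar Fq) := charP_of_injective_algebraMap (algebraMap Fq F).injective _
  have : ExpChar F (ringChar Fq) := ExpChar.prime hp
  have hΓu : evalAt (g i) (r i) ![P, -K] = Γ := by simp [evalAt, hΓdef, sub_eq_add_neg]
  have hΔv : evalAt (g i) (r i) ![N, -D] = Δ := by simp [evalAt, hΔdef, sub_eq_add_neg]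
  have hstep := hB.interpModN_succ hq Fintype.one_lt_card hΓu hΔv hΓ
  convert hstep using 1
  ext k j : 2
  fin_cases k <;> fin_cases j <;> rfl

/-- If `[P, -K]`, `[N, -D]` form a basis of the interpolation module `M_i`,
`Γ = P(g i) - K(r i)` and `Δ = N(g i) - D(r i)`, and `Γ ≠ 0`, then the rows of
`[[x^q - Γ^{q-1} x, 0], [Δ x, -Γ x]] ∘ [[P, -K], [N, -D]]` form a basis of the
interpolation module `M_{i+1}`. -/
theorem stmt19 {Fq F : Type*} [Field Fq] [Fintype Fq] [Field F] [Algebra Fq F]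
    {n : ℕ} (g r : ℕ → F) (hg : LinearIndependent Fq (fun j : Fin n => g j))
    (i : ℕ) (hi : i < n)
    (P K N D : Polynomial F)
    (hB : IsBasisOf (Fintype.card Fq) (InterpModN (Fintype.card Fq) g r i)
      ![![P, -K], ![N, -D]])
    (Γ Δ : F) (hΓdef : Γ = P.eval (g i) - K.eval (r i))
    (hΔdef : Δ = N.eval (g i) - D.eval (r i)) (hΓ : Γ ≠ 0) :
    IsBasisOf (Fintype.card Fq) (InterpModN (Fintype.card Fq) g r (i + 1))
      ![![(X ^ Fintype.card Fq - C (Γ ^ (Fintype.card Fq - 1)) * X).comp P,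
          (X ^ Fintype.card Fq - C (Γ ^ (Fintype.card Fq - 1)) * X).comp (-K)],
        ![(C Δ * X).comp P + (C (-Γ) * X).comp N,
          (C Δ * X).comp (-K) + (C (-Γ) * X).comp (-D)]] :=
  stmt19_general g r i P K N D hB Γ Δ hΓdef hΔdef hΓ
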